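/- For every n ≥ 3 and every choice of reals 0 ≤ t_1 < t_2 < … < t_n ≤ 1, consider the points θ_i = (t_i, t_i²) ∈ ℝ² on the parabola. There exists a realizable ranking σ ∈ Σ_{n,2} whose cell is bounded by n−1 of the bisecting hyperplanes; consequently, for every set A of pairwise comparisons with |A| ≤ n−2 there exists a realizable ranking σ' ≠ σ agreeing with σ on every comparison in A. Hence, for every d ≥ 2 there are configurations of n points in ℝ^d in general position for which identifying some realizable ranking requires at least n−1 pairwise comparisons. -/

import Mathlib

/-!
Put `θ_u = (u, u²)`. For `u < v`, the point `(x, y)` is closer to `θ_u` than to `θ_v` iff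
`x < X(u, v, y) := ((u + v)(u² + v²) + (1 - 2y)(u + v)) / 2`, the abscissa where the bisector of
`θ_u, θ_v` meets the horizontal line at height `y`. At height `1/2` every `X` is `≥ 0`, so
`(-1/2, 1/2)` realizes the identity ranking. Given two consecutive parameters `a < b`, at height
`y₀ = (1 + 3(a + b)²/2) / 2` one has, with `s = u + v` and `S = a + b`,
`4 X(u, v, y₀) + 2S³ = s(v - u)² + (s - S)²(s + 2S)`, which is strictly smallest at `(a, b)`:
a pair on one side of `(a, b)` has `|s - S| > b - a`, a pair straddling it has `v - u > b - a`.
A point at height `y₀` with abscissa just above `X(a, b, y₀)` therefore realizes the identity with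
`a, b` transposed. Every set of at most `n - 2` comparisons misses one of the `n - 1` consecutive
pairs, and such a transposition agrees with the identity on all other pairs.
-/

/-- `i` precedes `j` in the ranking `σ` (a permutation sending rank positions to objects). -/
def Precedes {n : ℕ} (σ : Equiv.Perm (Fin n)) (i j : Fin n) : Prop := σ.symm i < σ.symm j

/-- Realizable rankings of the configuration `θ`. -/
def realizableRankings {n d : ℕ} (θ : Fin n → EuclideanSpace ℝ (Fin d)) :
    Set (Equiv.Perm (Fin n)) :=
  {σ | ∃ r : EuclideanSpace ℝ (Fin d),
    ∀ i j : Fin n, Precedes σ i j ↔ dist (θ i) r < dist (θ j) r}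

/-- Two rankings agree on the pairwise comparison given by the unordered pair `p`. -/
def AgreeOnPair {n : ℕ} (σ σ' : Equiv.Perm (Fin n)) (p : Sym2 (Fin n)) : Prop :=
  ∀ i j : Fin n, p = s(i, j) → (Precedes σ i j ↔ Precedes σ' i j)

open Equiv

theorem Fin.castSucc_covBy_succ {m : ℕ} (k : Fin m) : k.castSucc ⋖ k.succ :=
  ⟨Fin.castSucc_lt_succ, fun c h₁ h₂ => by
    rw [Fin.lt_def] at h₁ h₂
    simp only [Fin.val_castSucc, Fin.val_succ] at h₁ h₂
    omega⟩

theorem swap_apply_lt_swap_apply_iff {α : Type*} [LinearOrder α] [DecidableEq α] {a b i j : α}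
    (hab : a ⋖ b) (h : s(i, j) ≠ s(a, b)) : swap a b i < swap a b j ↔ i < j := by
  have hb : ∀ c, c < b → c ≤ a := fun c => hab.le_of_lt
  have ha : ∀ c, a < c → b ≤ c := fun c => hab.ge_of_gt
  have := hab.lt
  rw [Ne, Sym2.eq_iff] at h
  simp only [swap_apply_def]
  split_ifs <;> grind

theorem exists_castSucc_succ_notMem {m : ℕ} {A : Finset (Sym2 (Fin (m + 1)))} (hA : A.card < m) :
    ∃ k : Fin m, s(k.castSucc, k.succ) ∉ A := by
  classical
  have hinj : Function.Injective fun k : Fin m => s(k.castSucc, k.succ) := by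
    intro k l hkl
    rcases Sym2.eq_iff.1 hkl with ⟨h, -⟩ | ⟨h₁, h₂⟩
    · exact Fin.castSucc_injective _ h
    · rw [Fin.ext_iff] at h₁ h₂
      simp only [Fin.val_castSucc, Fin.val_succ] at h₁ h₂
      omega
  obtain ⟨p, hp, hpA⟩ := Finset.exists_mem_notMem_of_card_lt_card (s := A)
    (by rwa [Finset.card_image_of_injective _ hinj, Finset.card_univ, Fintype.card_fin])
  obtain ⟨k, -, rfl⟩ := Finset.mem_image.1 hp
  exact ⟨k, hpA⟩

section Rankings

variable {n : ℕ}

theorem precedes_one_iff {i j : Fin n} : Precedes 1 i j ↔ i < j := Iff.rfl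

theorem precedes_swap_iff {a b i j : Fin n} :
    Precedes (swap a b) i j ↔ swap a b i < swap a b j := by
  rw [Precedes, symm_swap]

theorem mem_realizableRankings_of_precedes {d : ℕ} {θ : Fin n → EuclideanSpace ℝ (Fin d)}
    {σ : Perm (Fin n)} (r : EuclideanSpace ℝ (Fin d))
    (h : ∀ i j, Precedes σ i j → dist (θ i) r < dist (θ j) r) : σ ∈ realizableRankings θ := by
  refine ⟨r, fun i j => ⟨h i j, fun hij => ?_⟩⟩
  rcases lt_trichotomy (σ.symm i) (σ.symm j) with hlt | heq | hgt
  · exact hlt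
  · rw [σ.symm.injective heq] at hij
    exact absurd hij (lt_irrefl _)
  · exact absurd (h j i hgt) hij.not_gt

theorem agreeOnPair_one_swap {a b : Fin n} (hab : a ⋖ b) {p : Sym2 (Fin n)} (hp : p ≠ s(a, b)) :
    AgreeOnPair 1 (swap a b) p := by
  rintro i j rfl
  rw [precedes_one_iff, precedes_swap_iff, swap_apply_lt_swap_apply_iff hab hp]

end Rankings

section Parabola

noncomputable def parabolaPoint (u : ℝ) : EuclideanSpace ℝ (Fin 2) := !₂[u, u ^ 2]

noncomputable def bisectorX (u v y : ℝ) : ℝ :=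
  ((u + v) * (u ^ 2 + v ^ 2) + (1 - 2 * y) * (u + v)) / 2

theorem dist_parabolaPoint_sq (u x y : ℝ) :
    dist (parabolaPoint u) !₂[x, y] ^ 2 = (u - x) ^ 2 + (u ^ 2 - y) ^ 2 := by
  rw [EuclideanSpace.dist_eq, Real.sq_sqrt (by positivity)]
  simp [parabolaPoint, Fin.sum_univ_two, Real.dist_eq, sq_abs]

theorem dist_parabolaPoint_sq_sub (u v x y : ℝ) :
    dist (parabolaPoint v) !₂[x, y] ^ 2 - dist (parabolaPoint u) !₂[x, y] ^ 2 =
      2 * (v - u) * (bisectorX u v y - x) := by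
  rw [dist_parabolaPoint_sq, dist_parabolaPoint_sq, bisectorX]
  ring

theorem dist_parabolaPoint_lt_iff {u v : ℝ} (huv : u < v) (x y : ℝ) :
    dist (parabolaPoint u) !₂[x, y] < dist (parabolaPoint v) !₂[x, y] ↔ x < bisectorX u v y := by
  rw [← sq_lt_sq₀ dist_nonneg dist_nonneg, ← sub_pos, dist_parabolaPoint_sq_sub,
    mul_pos_iff_of_pos_left (by linarith), sub_pos]

theorem dist_parabolaPoint_lt_iff' {u v : ℝ} (huv : u < v) (x y : ℝ) :
    dist (parabolaPoint v) !₂[x, y] < dist (parabolaPoint u) !₂[x, y] ↔ bisectorX u v y < x := by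
  rw [← sq_lt_sq₀ dist_nonneg dist_nonneg, ← sub_pos, ← neg_sub, dist_parabolaPoint_sq_sub,
    ← mul_neg, neg_sub, mul_pos_iff_of_pos_left (by linarith), sub_pos]

noncomputable def swapHeight (a b : ℝ) : ℝ := (1 + 3 / 2 * (a + b) ^ 2) / 2

theorem bisectorX_swapHeight (a b u v : ℝ) :
    4 * bisectorX u v (swapHeight a b) + 2 * (a + b) ^ 3 =
      (u + v) * (v - u) ^ 2 + (u + v - (a + b)) ^ 2 * (u + v + 2 * (a + b)) := by
  rw [bisectorX, swapHeight]
  ring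

theorem bisectorX_swapHeight_lt_of_far {a b u v : ℝ} (ha : 0 ≤ a) (hab : a < b) (hu : 0 ≤ u)
    (huv : u < v) (hfar : b - a < |u + v - (a + b)|) :
    bisectorX a b (swapHeight a b) < bisectorX u v (swapHeight a b) := by
  have hsq : (b - a) ^ 2 < (u + v - (a + b)) ^ 2 := by
    rw [← sq_abs (u + v - _)]
    exact pow_lt_pow_left₀ hfar (by linarith) two_ne_zero
  have hpos : 0 < (u + v) * (v - u) ^ 2 := mul_pos (by linarith) (pow_pos (by linarith) 2)
  nlinarith [bisectorX_swapHeight a b a b, bisectorX_swapHeight a b u v,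
    mul_le_mul_of_nonneg_left hsq.le (by linarith : (0 : ℝ) ≤ a + b)]

theorem bisectorX_swapHeight_lt_of_straddle {a b u v : ℝ} (hab : a < b) (hu : 0 ≤ u)
    (hua : u ≤ a) (hbv : b ≤ v) (hne : u < a ∨ b < v) :
    bisectorX a b (swapHeight a b) < bisectorX u v (swapHeight a b) := by
  have hw : 0 < (a - u) + (v - b) := by rcases hne with h | h <;> linarith
  nlinarith [bisectorX_swapHeight a b a b, bisectorX_swapHeight a b u v,
    mul_pos hw (sub_pos.2 hab), mul_pos (mul_pos hw (sub_pos.2 hab)) (sub_pos.2 hab),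
    mul_nonneg (sq_nonneg (u + v - (a + b))) (by linarith : (0 : ℝ) ≤ u + v + 2 * (a + b)),
    mul_nonneg (mul_nonneg hw.le (sub_pos.2 hab).le) (by linarith : (0 : ℝ) ≤ v - (b - a)),
    mul_nonneg (by linarith : (0 : ℝ) ≤ u + v) (sq_nonneg ((a - u) + (v - b)))]

theorem bisectorX_swapHeight_lt {a b u v : ℝ} (ha : 0 ≤ a) (hab : a < b) (hu : 0 ≤ u)
    (huv : u < v) (hu' : u ≤ a ∨ b ≤ u) (hv' : v ≤ a ∨ b ≤ v) (hne : (u, v) ≠ (a, b)) :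
    bisectorX a b (swapHeight a b) < bisectorX u v (swapHeight a b) := by
  rcases hu' with hua | hbu <;> rcases hv' with hva | hbv
  · exact bisectorX_swapHeight_lt_of_far ha hab hu huv (lt_abs.2 (Or.inr (by linarith)))
  · refine bisectorX_swapHeight_lt_of_straddle hab hu hua hbv ?_
    by_contra! h
    exact hne (Prod.ext (le_antisymm hua h.1) (le_antisymm h.2 hbv))
  · linarith
  · exact bisectorX_swapHeight_lt_of_far ha hab hu huv (lt_abs.2 (Or.inl (by linarith)))

theorem exists_refPoint_swap {ι : Type*} [Finite ι] {t : ι → ℝ} (ht : ∀ i, 0 ≤ t i) {a b : ℝ}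
    (ha : 0 ≤ a) (hab : a < b) (hgap : ∀ i, t i ≤ a ∨ b ≤ t i) :
    ∃ r, dist (parabolaPoint b) r < dist (parabolaPoint a) r ∧
      ∀ i j, t i < t j → (t i, t j) ≠ (a, b) →
        dist (parabolaPoint (t i)) r < dist (parabolaPoint (t j)) r := by
  set y := swapHeight a b
  let pairs : Set (ι × ι) := {p | t p.1 < t p.2 ∧ (t p.1, t p.2) ≠ (a, b)}
  obtain ⟨x, hx, hxpairs⟩ := (Set.finite_singleton (bisectorX a b y)).exists_between'
    (Set.toFinite ((fun p : ι × ι => bisectorX (t p.1) (t p.2) y) '' pairs))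
    (by
      rintro _ rfl _ ⟨p, ⟨hp, hne⟩, rfl⟩
      exact bisectorX_swapHeight_lt ha hab (ht _) hp (hgap _) (hgap _) hne)
  refine ⟨!₂[x, y], (dist_parabolaPoint_lt_iff' hab x y).2 (hx _ rfl), fun i j hij hne => ?_⟩
  exact (dist_parabolaPoint_lt_iff hij x y).2 (hxpairs _ ⟨(i, j), ⟨hij, hne⟩, rfl⟩)

variable {n : ℕ} {t : Fin n → ℝ}

theorem one_mem_realizableRankings (hmono : StrictMono t) (ht : ∀ i, 0 ≤ t i) :
    1 ∈ realizableRankings (parabolaPoint ∘ t) := by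
  refine mem_realizableRankings_of_precedes !₂[-1 / 2, 1 / 2] fun i j hij => ?_
  refine (dist_parabolaPoint_lt_iff (hmono (precedes_one_iff.1 hij)) _ _).2 ?_
  rw [bisectorX]
  nlinarith [mul_nonneg (add_nonneg (ht i) (ht j))
    (add_nonneg (sq_nonneg (t i)) (sq_nonneg (t j)))]

theorem swap_mem_realizableRankings (hmono : StrictMono t) (ht : ∀ i, 0 ≤ t i) {a b : Fin n}
    (hab : a ⋖ b) : swap a b ∈ realizableRankings (parabolaPoint ∘ t) := by
  have hgap (i : Fin n) : t i ≤ t a ∨ t b ≤ t i :=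
    (le_or_gt i a).imp hmono.monotone.imp fun h => hmono.monotone (hab.ge_of_gt h)
  obtain ⟨r, hba, hother⟩ := exists_refPoint_swap ht (ht a) (hmono hab.lt) hgap
  refine mem_realizableRankings_of_precedes r fun i j hij => ?_
  rw [precedes_swap_iff] at hij
  by_cases hp : s(i, j) = s(a, b)
  · rcases Sym2.eq_iff.1 hp with ⟨rfl, rfl⟩ | ⟨rfl, rfl⟩
    · rw [swap_apply_left, swap_apply_right] at hij
      exact absurd hab.lt hij.not_gt
    · exact hba
  · rw [swap_apply_lt_swap_apply_iff hab hp] at hij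
    refine hother i j (hmono hij) fun h => hp ?_
    rw [hmono.injective (Prod.ext_iff.1 h).1, hmono.injective (Prod.ext_iff.1 h).2]

end Parabola

/-- for `n ≥ 3` points `θ_i = (t_i, t_i²)` on the parabola with
`0 ≤ t_1 < ⋯ < t_n ≤ 1`, there is a realizable ranking `σ` such that for every set `A` of
at most `n-2` pairwise comparisons some realizable ranking `σ' ≠ σ` agrees with `σ` on all
of `A`; hence identifying `σ` requires at least `n-1` pairwise comparisons. -/
theorem stmt_17 (n : ℕ) (hn : 3 ≤ n) (t : Fin n → ℝ)
    (hmono : StrictMono t) (hrange : ∀ i : Fin n, t i ∈ Set.Icc (0 : ℝ) 1)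
    (θ : Fin n → EuclideanSpace ℝ (Fin 2))
    (hθ : ∀ i : Fin n, θ i = (WithLp.equiv 2 (Fin 2 → ℝ)).symm ![t i, (t i) ^ 2]) :
    ∃ σ ∈ realizableRankings θ,
      ∀ A : Finset (Sym2 (Fin n)), A.card ≤ n - 2 →
        ∃ σ' ∈ realizableRankings θ, σ' ≠ σ ∧ ∀ p ∈ A, AgreeOnPair σ σ' p := by
  obtain ⟨m, rfl⟩ : ∃ m, n = m + 1 := ⟨n - 1, by omega⟩
  obtain rfl : θ = parabolaPoint ∘ t := funext hθ
  have ht (i : Fin (m + 1)) : 0 ≤ t i := (hrange i).1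
  refine ⟨1, one_mem_realizableRankings hmono ht, fun A hA => ?_⟩
  obtain ⟨k, hk⟩ := exists_castSucc_succ_notMem (A := A) (by omega)
  have hcov := Fin.castSucc_covBy_succ k
  exact ⟨swap _ _, swap_mem_realizableRankings hmono ht hcov, swap_eq_one_iff.not.2 hcov.ne,
    fun p hp => agreeOnPair_one_swap hcov (ne_of_mem_of_not_mem hp hk)⟩
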